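/- arXiv:2601.12695 — 2 statements merged into one kernel-verified Lean document; each statement's English description precedes it below -/
import Mathlib

section
/- The Markov parameters of the cycled system satisfy the sparsity property: for all i, j ≥ 0, the matrix S_q^i (Č Ǎ^{i+j-1} B̌) S_m^j is block diagonal, where S_q and S_m are cyclic shift matrices (assuming i+j ≥ 1). -/
open Matrix

/-- Block cyclic shift matrix with `I_d` blocks on the block superdiagonal and
bottom-left corner. -/
def cyclicShift (N d : ℕ) [NeZero N] :
    Matrix (Fin N × Fin d) (Fin N × Fin d) ℝ :=
  fun p r => if r.1 = p.1 + 1 ∧ r.2 = p.2 then 1 else 0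

/-- Block cyclic matrix with rectangular blocks `A_k` at positions `(k+1 mod N, k)`. -/
def blockCyclic {N a b : ℕ} [NeZero N] (A : Fin N → Matrix (Fin a) (Fin b) ℝ) :
    Matrix (Fin N × Fin a) (Fin N × Fin b) ℝ :=
  fun p r => if p.1 = r.1 + 1 then A r.1 p.2 r.2 else 0

/-- Block diagonal matrix `diag(C_0,…,C_{N-1})`. -/
def blockDiag {N q n : ℕ} (C : Fin N → Matrix (Fin q) (Fin n) ℝ) :
    Matrix (Fin N × Fin q) (Fin N × Fin n) ℝ :=
  fun p r => if p.1 = r.1 then C p.1 p.2 r.2 else 0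

def IsBlockDiag {N d e : ℕ} (M : Matrix (Fin N × Fin d) (Fin N × Fin e) ℝ) : Prop :=
  ∀ p r, p.1 ≠ r.1 → M p r = 0

open Fin.NatCast Fin.CommRing

lemma shift_pow_apply {N d : ℕ} [NeZero N] (i : ℕ) (p r : Fin N × Fin d)
    (h : r.1 ≠ p.1 + (i : Fin N)) : ((cyclicShift N d) ^ i) p r = 0 := by
  induction i generalizing p r with
  | zero =>
    simp only [pow_zero, Matrix.one_apply]
    split
    · next heq => exact absurd (by rw [heq]; simp) h
    · rfl
  | succ k ih =>
    rw [pow_succ, Matrix.mul_apply]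
    apply Finset.sum_eq_zero
    intro a _
    by_cases ha : a.1 = p.1 + (k : Fin N)
    · have : ¬(r.1 = a.1 + 1 ∧ r.2 = a.2) := by
        rintro ⟨h1, _⟩
        apply h
        rw [h1, ha]
        push_cast
        ring
      simp [cyclicShift, this]
    · rw [ih p a ha, zero_mul]

lemma bc_pow_apply {N n : ℕ} [NeZero N] (A : Fin N → Matrix (Fin n) (Fin n) ℝ)
    (k : ℕ) (p r : Fin N × Fin n) (h : p.1 ≠ r.1 + (k : Fin N)) :
    ((blockCyclic A) ^ k) p r = 0 := by
  induction k generalizing p r with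
  | zero =>
    simp only [pow_zero, Matrix.one_apply]
    split
    · next heq => exact absurd (by rw [heq]; simp) h
    · rfl
  | succ k ih =>
    rw [pow_succ, Matrix.mul_apply]
    apply Finset.sum_eq_zero
    intro a _
    by_cases ha : p.1 = a.1 + (k : Fin N)
    · have : ¬(a.1 = r.1 + 1) := by
        intro h1
        apply h
        rw [ha, h1]
        push_cast
        ring
      simp [blockCyclic, this]
    · rw [ih p a ha, zero_mul]

/-- Markov parameter sparsity -/
theorem markov_sparsity {N n m q : ℕ} [NeZero N]
    (A : Fin N → Matrix (Fin n) (Fin n) ℝ)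
    (B : Fin N → Matrix (Fin n) (Fin m) ℝ)
    (C : Fin N → Matrix (Fin q) (Fin n) ℝ)
    (i j : ℕ) (hij : 1 ≤ i + j) :
    IsBlockDiag ((cyclicShift N q) ^ i *
      (blockDiag C * (blockCyclic A) ^ (i + j - 1) * blockCyclic B) *
        (cyclicShift N m) ^ j) := by
  intro p r hpr
  rw [Matrix.mul_apply]
  apply Finset.sum_eq_zero
  intro d _
  by_cases hd : r.1 = d.1 + (j : Fin N)
  · suffices h : ((cyclicShift N q) ^ i *
        (blockDiag C * (blockCyclic A) ^ (i + j - 1) * blockCyclic B)) p d = 0 by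
      rw [h, zero_mul]
    rw [Matrix.mul_apply]
    apply Finset.sum_eq_zero
    intro a _
    by_cases ha : a.1 = p.1 + (i : Fin N)
    · suffices h : (blockDiag C * (blockCyclic A) ^ (i + j - 1) * blockCyclic B) a d = 0 by
        rw [h, mul_zero]
      rw [Matrix.mul_apply]
      apply Finset.sum_eq_zero
      intro c _
      by_cases hc : c.1 = d.1 + 1
      · suffices h : (blockDiag C * (blockCyclic A) ^ (i + j - 1)) a c = 0 by
          rw [h, zero_mul]
        rw [Matrix.mul_apply]
        apply Finset.sum_eq_zero
        intro b _
        by_cases hb : a.1 = b.1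
        · suffices h : ((blockCyclic A) ^ (i + j - 1)) b c = 0 by
            rw [h, mul_zero]
          apply bc_pow_apply
          intro hbc
          apply hpr
          have key : p.1 + (i : Fin N) + (j : Fin N) = r.1 + (i : Fin N) + (j : Fin N) := by
            have h1 : ((1 + (i + j - 1) : ℕ) : Fin N) = ((i + j : ℕ) : Fin N) := by
              congr 1; omega
            push_cast at h1
            calc p.1 + (i : Fin N) + (j : Fin N)
                = a.1 + (j : Fin N) := by rw [ha]
              _ = b.1 + (j : Fin N) := by rw [hb]
              _ = c.1 + ((i + j - 1 : ℕ) : Fin N) + (j : Fin N) := by rw [hbc]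
              _ = d.1 + (1 + ((i + j - 1 : ℕ) : Fin N)) + (j : Fin N) := by rw [hc]; ring
              _ = d.1 + ((i : Fin N) + (j : Fin N)) + (j : Fin N) := by rw [h1]
              _ = (d.1 + (j : Fin N)) + (i : Fin N) + (j : Fin N) := by ring
              _ = r.1 + (i : Fin N) + (j : Fin N) := by rw [hd]
          exact add_right_cancel (add_right_cancel key)
        · have h0 : _root_.blockDiag C a b = 0 := by simp [_root_.blockDiag, hb]
          rw [h0, zero_mul]
      · simp [blockCyclic, hc]
    · rw [shift_pow_apply i p a ha, zero_mul]
  · rw [shift_pow_apply j d r hd, mul_zero]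
end

section
/- Let Ǎ be the block cyclic matrix built from a single matrix A (each nonzero block equal to A). Then μ is an eigenvalue of Ǎ if and only if μ^N is an eigenvalue of A^N. -/
open Matrix

/-- Block cyclic matrix over ℂ built from a single matrix `A`:
block `(i+1 mod N, i) = A`, all other blocks zero. -/
def blockCyclicConst {N n : ℕ} [NeZero N] (A : Matrix (Fin n) (Fin n) ℂ) :
    Matrix (Fin N × Fin n) (Fin N × Fin n) ℂ :=
  fun p q => if p.1 = q.1 + 1 then A p.2 q.2 else 0

open Kronecker
open Fin.NatCast

/-- The cyclic permutation matrix. -/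
def cycP (N : ℕ) [NeZero N] : Matrix (Fin N) (Fin N) ℂ :=
  fun i j => if i = j + 1 then 1 else 0

lemma blockCyclicConst_eq_kron {N n : ℕ} [NeZero N] (A : Matrix (Fin n) (Fin n) ℂ) :
    blockCyclicConst (N := N) A = cycP N ⊗ₖ A := by
  ext p q
  simp only [blockCyclicConst, cycP, kroneckerMap_apply, ite_mul, one_mul, zero_mul]

lemma cycP_pow {N : ℕ} [NeZero N] (k : ℕ) :
    (cycP N) ^ k = fun i j => if i = j + (k : Fin N) then (1 : ℂ) else 0 := by
  induction k with
  | zero => ext i j; simp [Matrix.one_apply]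
  | succ k ih =>
    ext i j
    rw [pow_succ, Matrix.mul_apply]
    rw [Finset.sum_eq_single (j + 1)]
    · simp only [ih, cycP, if_pos rfl, mul_one]
      have : j + ((k : Fin N) + 1) = j + 1 + (k : Fin N) := by rw [add_comm (k : Fin N) 1, ← add_assoc]
      simp [Nat.cast_add, Nat.cast_one, this]
    · intro b _ hb
      simp [cycP, hb]
    · simp

lemma cycP_pow_self {N : ℕ} [NeZero N] : (cycP N) ^ N = 1 := by
  rw [cycP_pow]
  ext i j
  simp [Matrix.one_apply, eq_comm]

lemma kron_pow {N n : ℕ} (P : Matrix (Fin N) (Fin N) ℂ) (A : Matrix (Fin n) (Fin n) ℂ)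
    (k : ℕ) : (P ⊗ₖ A) ^ k = (P ^ k) ⊗ₖ (A ^ k) := by
  induction k with
  | zero => simp [Matrix.one_kronecker_one]
  | succ k ih => rw [pow_succ, pow_succ, pow_succ, ih, Matrix.mul_kronecker_mul]

lemma mem_spectrum_iff_det {m : Type*} [Fintype m] [DecidableEq m]
    (M : Matrix m m ℂ) (μ : ℂ) :
    μ ∈ spectrum ℂ M ↔ (μ • (1 : Matrix m m ℂ) - M).det = 0 := by
  rw [spectrum.mem_iff, Matrix.isUnit_iff_isUnit_det, isUnit_iff_ne_zero, not_ne_iff,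
    Algebra.algebraMap_eq_smul_one]

lemma spec_one_kron {N n : ℕ} [NeZero N] (B : Matrix (Fin n) (Fin n) ℂ) (x : ℂ) :
    x ∈ spectrum ℂ ((1 : Matrix (Fin N) (Fin N) ℂ) ⊗ₖ B) ↔ x ∈ spectrum ℂ B := by
  rw [mem_spectrum_iff_det, mem_spectrum_iff_det]
  have h : x • (1 : Matrix (Fin N × Fin n) (Fin N × Fin n) ℂ) -
      (1 : Matrix (Fin N) (Fin N) ℂ) ⊗ₖ B =
      (1 : Matrix (Fin N) (Fin N) ℂ) ⊗ₖ (x • (1 : Matrix (Fin n) (Fin n) ℂ) - B) := by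
    ext p q
    by_cases h1 : p.1 = q.1 <;>
      simp [Matrix.one_apply, Matrix.kroneckerMap_apply, Matrix.sub_apply,
        Matrix.smul_apply, h1, Prod.ext_iff, mul_sub]
  rw [h, Matrix.det_kronecker]
  simp [pow_eq_zero_iff, NeZero.ne N]

lemma spec_smul_root {N n : ℕ} [NeZero N] (A : Matrix (Fin n) (Fin n) ℂ)
    {ζ : ℂ} (hζ : ζ ^ N = 1) :
    spectrum ℂ (ζ • blockCyclicConst (N := N) A) =
      spectrum ℂ (blockCyclicConst (N := N) A) := by
  have hζ0 : ζ ≠ 0 := fun h => by simp [h, NeZero.ne N, zero_pow] at hζ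
  have hmod : ∀ a : ℕ, ζ ^ (a % N) = ζ ^ a := by
    intro a
    conv_rhs => rw [← Nat.mod_add_div a N]
    rw [pow_add, pow_mul, hζ, one_pow, mul_one]
  set D : Matrix (Fin N × Fin n) (Fin N × Fin n) ℂ :=
    Matrix.diagonal (fun p => ζ ^ (p.1 : ℕ)) with hD
  set D' : Matrix (Fin N × Fin n) (Fin N × Fin n) ℂ :=
    Matrix.diagonal (fun p => ζ⁻¹ ^ (p.1 : ℕ)) with hD'
  have hDD' : D * D' = 1 := by
    rw [hD, hD', Matrix.diagonal_mul_diagonal]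
    convert Matrix.diagonal_one with p
    rw [← mul_pow, mul_inv_cancel₀ hζ0, one_pow]
  have hD'D : D' * D = 1 := by
    rw [hD, hD', Matrix.diagonal_mul_diagonal]
    convert Matrix.diagonal_one with p
    rw [← mul_pow, inv_mul_cancel₀ hζ0, one_pow]
  set u : (Matrix (Fin N × Fin n) (Fin N × Fin n) ℂ)ˣ := ⟨D, D', hDD', hD'D⟩ with hu
  have hsc : ∀ j : Fin N, ζ ^ (((j + 1 : Fin N)) : ℕ) * ζ⁻¹ ^ ((j : Fin N) : ℕ) = ζ := by
    intro j
    rw [Fin.val_add, Fin.val_one', hmod, pow_add, hmod, pow_one, mul_right_comm,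
      ← mul_pow, mul_inv_cancel₀ hζ0, one_pow, one_mul]
  have key : (↑u : Matrix (Fin N × Fin n) (Fin N × Fin n) ℂ) * blockCyclicConst (N := N) A *
      (↑u⁻¹ : Matrix (Fin N × Fin n) (Fin N × Fin n) ℂ) = ζ • blockCyclicConst (N := N) A := by
    show D * blockCyclicConst (N := N) A * D' = _
    ext p q
    rw [hD, hD', Matrix.mul_diagonal, Matrix.diagonal_mul, Matrix.smul_apply]
    by_cases hpq : p.1 = q.1 + 1
    · simp only [blockCyclicConst, if_pos hpq, hpq, smul_eq_mul]
      rw [mul_right_comm, hsc]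
    · simp [blockCyclicConst, hpq]
  rw [← key, spectrum.units_conjugate]

/-- `μ` is an eigenvalue of `Ǎ` iff `μ^N` is an eigenvalue of `A^N`. -/
theorem blockCyclic_eigenvalues {N n : ℕ} [NeZero N]
    (A : Matrix (Fin n) (Fin n) ℂ) (μ : ℂ) :
    μ ∈ spectrum ℂ (blockCyclicConst (N := N) A) ↔ μ ^ N ∈ spectrum ℂ (A ^ N) := by
  have hNpos : 0 < N := Nat.pos_of_ne_zero (NeZero.ne N)
  rcases Nat.eq_zero_or_pos n with hn | hn
  · subst hn
    constructor <;> intro h <;>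
      simp [spectrum.mem_iff, isUnit_of_subsingleton] at h
  have hAN : blockCyclicConst (N := N) A ^ N =
      (1 : Matrix (Fin N) (Fin N) ℂ) ⊗ₖ (A ^ N) := by
    rw [blockCyclicConst_eq_kron, kron_pow, cycP_pow_self]
  haveI : NeZero n := ⟨by omega⟩
  haveI : Nontrivial (Matrix (Fin N × Fin n) (Fin N × Fin n) ℂ) := Matrix.nonempty
  have hspec : spectrum ℂ (A ^ N) =
      (· ^ N) '' spectrum ℂ (blockCyclicConst (N := N) A) := by
    rw [← spectrum.map_pow_of_pos _ hNpos, hAN]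
    ext x
    exact (spec_one_kron (A ^ N) x).symm
  constructor
  · intro h
    rw [hspec]
    exact ⟨μ, h, rfl⟩
  · intro h
    rw [hspec] at h
    obtain ⟨lam, hlam, hpow'⟩ := h
    have hpow : lam ^ N = μ ^ N := hpow'
    rcases eq_or_ne μ 0 with hμ | hμ
    · subst hμ
      have : lam = 0 := by
        have := hpow
        rw [zero_pow (NeZero.ne N)] at this
        exact pow_eq_zero_iff (NeZero.ne N) |>.mp this
      rwa [← this]
    · have hlam0 : lam ≠ 0 := by
        intro h0
        apply hμ
        have : μ ^ N = 0 := by rw [← hpow, h0, zero_pow (NeZero.ne N)]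
        exact pow_eq_zero_iff (NeZero.ne N) |>.mp this
      set ζ : ℂ := μ * lam⁻¹ with hζdef
      have hζN : ζ ^ N = 1 := by
        rw [hζdef, mul_pow, inv_pow, ← hpow, mul_inv_cancel₀ (pow_ne_zero _ hlam0)]
      have hζ0 : ζ ≠ 0 := mul_ne_zero hμ (inv_ne_zero hlam0)
      have : μ ∈ spectrum ℂ (ζ • blockCyclicConst (N := N) A) := by
        rw [show (ζ • blockCyclicConst (N := N) A) =
            (Units.mk0 ζ hζ0) • blockCyclicConst (N := N) A from by rw [Units.smul_def, Units.val_mk0],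
          spectrum.unit_smul_eq_smul]
        refine ⟨lam, hlam, ?_⟩
        show (Units.mk0 ζ hζ0) • lam = μ
        rw [Units.smul_def, Units.val_mk0, smul_eq_mul, hζdef, mul_assoc,
          inv_mul_cancel₀ hlam0, mul_one]
      rwa [spec_smul_root A hζN] at this
end
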